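/- Fix a connected graph G with n ≥ 2 vertices and m edges, a vertex-consistent orientation σ, a cycle basis ρ_1, …, ρ_c (c = m − n + 1), a noise vector ε ∈ {−1,0,1}^m, a vector x̂ = [x; f] ∈ ℤ^{m+1}, and an integer B ≥ 2. Then the number of configurations p ∈ {1, …, B}^n that are sad with (σ, x̂) is at most (2B)^{n−1}. -/

import Mathlib

/-!
For a sad `p`, the last coordinate of `x̂ ∈ Lat(r)` reads `f = xᵀ(ℓ_σ(p) + ε)`, a linear equation
`yᵀp = f - εᵀx` with `y = M^σ(G)ᵀx`. If `y ≠ 0`, this equation determines one coordinate of `p`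
from the others, leaving at most `B^{n-1} ≤ (2B)^{n-1}` configurations. If `y = 0`, then `x` lies
in the cycle space `ker M^σ(G)ᵀ`; by connectivity it has dimension `m - n + 1`, so it is spanned
by the basis cycles, and since then `f = εᵀx`, `x̂` is the same combination of the `ŵ_{ρ_i,σ}`,
contradicting badness.
-/

open scoped BigOperators

/-- A graph on `Fin n` with `m` edges is given by the endpoint map `ends`.
An *orientation* `σ` assigns to each edge either its reference pair or the swapped pair. -/
def IsOrientation {n m : ℕ} (ends σ : Fin m → Fin n × Fin n) : Prop :=
  ∀ e, σ e = ends e ∨ σ e = ((ends e).2, (ends e).1)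

/-- The graph is simple: no loops and no parallel edges. -/
def IsSimple {n m : ℕ} (ends : Fin m → Fin n × Fin n) : Prop :=
  (∀ e, (ends e).1 ≠ (ends e).2) ∧
    ∀ e e', (ends e = ends e' ∨ ends e = ((ends e').2, (ends e').1)) → e = e'

/-- The graph is connected. -/
def IsConn {n m : ℕ} (ends : Fin m → Fin n × Fin n) : Prop :=
  ∀ a b : Fin n,
    Relation.ReflTransGen (fun u v => ∃ e, ends e = (u, v) ∨ ends e = (v, u)) a b

/-- The configuration orientation `σ_p`: edge `{i,j}` is oriented `(i,j)` if `p i < p j`,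
and `(j,i)` otherwise. -/
def configOrient {n m : ℕ} (ends : Fin m → Fin n × Fin n) {α : Type*} [LinearOrder α]
    (p : Fin n → α) : Fin m → Fin n × Fin n :=
  fun e => if p (ends e).1 < p (ends e).2 then ends e else ((ends e).2, (ends e).1)

/-- The oriented measurement map `ℓ_σ`: the entry for an edge oriented `(i,j)` is `p j - p i`. -/
def omeas {n m : ℕ} (σ : Fin m → Fin n × Fin n) {R : Type*} [Ring R] (p : Fin n → R) :
    Fin m → R :=
  fun e => p (σ e).2 - p (σ e).1

/-- The measurement map `ℓ`: the entry for edge `{i,j}` is `|p j - p i|`. -/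
def meas {n m : ℕ} (ends : Fin m → Fin n × Fin n) {R : Type*} [Ring R] [LinearOrder R] [IsStrictOrderedRing R]
    (p : Fin n → R) : Fin m → R :=
  fun e => |p (ends e).2 - p (ends e).1|

/-- The signed edge incidence matrix `M^σ(G)`: the row of an edge oriented `(i,j)` has
entry `-1` in column `i`, `+1` in column `j`, and `0` elsewhere. -/
def inc {n m : ℕ} (σ : Fin m → Fin n × Fin n) : Matrix (Fin m) (Fin n) ℝ :=
  Matrix.of fun e u => if u = (σ e).2 then 1 else if u = (σ e).1 then -1 else 0

/-- A simple cycle in the graph `ends`: a cyclic sequence of `k ≥ 3` distinct vertices,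
consecutive ones joined by distinct edges of the graph. -/
structure SimpleCycle {n m : ℕ} (ends : Fin m → Fin n × Fin n) where
  k : ℕ
  hk : 3 ≤ k
  v : ZMod k → Fin n
  hv : Function.Injective v
  edge : ZMod k → Fin m
  hedge : Function.Injective edge
  hends : ∀ i : ZMod k,
    ends (edge i) = (v i, v (i + 1)) ∨ ends (edge i) = (v (i + 1), v i)

open Classical in
/-- The signed cycle vector `w_{ρ,σ}` of a simple cycle `ρ` with respect to an
orientation `σ`: `0` off the cycle, `+1` on edges whose `σ`-orientation agrees with
the traversal, `-1` on those that disagree. -/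
noncomputable def cycVec {n m : ℕ} {ends : Fin m → Fin n × Fin n} (ρ : SimpleCycle ends)
    (σ : Fin m → Fin n × Fin n) : Fin m → ℤ := fun e =>
  if h : ∃ i, ρ.edge i = e then
    (if σ e = (ρ.v h.choose, ρ.v (h.choose + 1)) then 1 else -1)
  else 0

/-- The `e`-th column of the `(m+1) × m` matrix `[I_m ; rᵀ]`. -/
def latCol {m : ℕ} (r : Fin m → ℤ) (e : Fin m) : Fin (m + 1) → ℤ :=
  Fin.snoc (fun e' => if e' = e then 1 else 0) (r e)

/-- The lattice `LatZ(r) ⊆ ℤ^{m+1}`: integer span of the columns of `[I_m ; rᵀ]`. -/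
def LatZ {m : ℕ} (r : Fin m → ℤ) : Submodule ℤ (Fin (m + 1) → ℤ) :=
  Submodule.span ℤ (Set.range (latCol r))

/-- The Euclidean norm of an integer vector. -/
noncomputable def norm2 {d : ℕ} (y : Fin d → ℤ) : ℝ :=
  Real.sqrt (∑ j, ((y j : ℝ)) ^ 2)

/-- The hatted cycle vector `ŵ_{ρ,σ} = [w_{ρ,σ} ; εᵀ w_{ρ,σ}]`. -/
noncomputable def hatCycVec {n m : ℕ} {ends : Fin m → Fin n × Fin n} (ρ : SimpleCycle ends)
    (σ : Fin m → Fin n × Fin n) (ε : Fin m → ℤ) : Fin (m + 1) → ℤ :=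
  Fin.snoc (cycVec ρ σ) (∑ e, ε e * cycVec ρ σ e)

/-- A vector with all entries in `{-1, 0, 1}`. -/
def SmallVec {m : ℕ} (ε : Fin m → ℤ) : Prop := ∀ e, ε e = -1 ∨ ε e = 0 ∨ ε e = 1

/-- Cast an integer vector to a real vector. -/
def castR {d : ℕ} (y : Fin d → ℤ) : Fin d → ℝ := fun j => (y j : ℝ)

/-- `r` is *bad* with `(σ, x̂)` (relative to the cycle basis `ρs` and noise `ε`):
`x̂` is linearly independent of the hatted cycle vectors, and `x̂` together with all the
hatted cycle vectors lie in `LatZ r`. -/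
noncomputable def BadWith {n m c : ℕ} {ends : Fin m → Fin n × Fin n}
    (ρs : Fin c → SimpleCycle ends) (σ : Fin m → Fin n × Fin n) (ε : Fin m → ℤ)
    (xhat : Fin (m + 1) → ℤ) (r : Fin m → ℤ) : Prop :=
  castR xhat ∉ Submodule.span ℝ (Set.range fun i => castR (hatCycVec (ρs i) σ ε)) ∧
    xhat ∈ LatZ r ∧ ∀ i, hatCycVec (ρs i) σ ε ∈ LatZ r

/-- `p` is *sad* with `(σ, x̂)`: `r := ℓ_σ(p) + ε` has all coordinates in `{-1, 0, …, B}`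
and `r` is bad with `(σ, x̂)`. -/
noncomputable def SadWith {n m c : ℕ} {ends : Fin m → Fin n × Fin n}
    (ρs : Fin c → SimpleCycle ends) (σ : Fin m → Fin n × Fin n) (ε : Fin m → ℤ)
    (xhat : Fin (m + 1) → ℤ) (B : ℕ) (p : Fin n → ℤ) : Prop :=
  (∀ e, -1 ≤ omeas σ p e + ε e ∧ omeas σ p e + ε e ≤ (B : ℤ)) ∧
    BadWith ρs σ ε xhat (fun e => omeas σ p e + ε e)

open Matrix Finset

lemma last_eq_of_mem_LatZ {m : ℕ} {r : Fin m → ℤ} {v : Fin (m + 1) → ℤ} (hv : v ∈ LatZ r) :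
    v (Fin.last m) = ∑ e, r e * v e.castSucc := by
  induction hv using Submodule.span_induction with
  | mem _ h => obtain ⟨e, rfl⟩ := h; simp [latCol]
  | zero => simp
  | add _ _ _ _ h₁ h₂ => simp [h₁, h₂, mul_add, Finset.sum_add_distrib]
  | smul a _ _ h => simp [h, Finset.mul_sum, mul_left_comm]

section Incidence

variable {n m : ℕ} {ends σ : Fin m → Fin n × Fin n}

lemma IsOrientation.fst_ne_snd (hσ : IsOrientation ends σ) (hG : IsSimple ends) (e : Fin m) :
    (σ e).1 ≠ (σ e).2 := by
  rcases hσ e with h | h <;> rw [h]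
  exacts [hG.1 e, (hG.1 e).symm]

lemma inc_mulVec (hloop : ∀ e, (σ e).1 ≠ (σ e).2) (p : Fin n → ℝ) :
    inc σ *ᵥ p = omeas σ p := by
  ext e
  have key : ∀ u, inc σ e u * p u =
      (if u = (σ e).2 then p u else 0) - (if u = (σ e).1 then p u else 0) := by
    intro u
    by_cases h₂ : u = (σ e).2
    · subst h₂; simp [inc, (hloop e).symm]
    · by_cases h₁ : u = (σ e).1
      · subst h₁; simp [inc, hloop e]
      · simp [inc, h₁, h₂]
  simp only [mulVec, dotProduct, key, Finset.sum_sub_distrib, Finset.sum_ite_eq', Finset.mem_univ,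
    if_true, omeas]

lemma IsConn.eq_of_omeas_eq_zero {R : Type*} [Ring R] (hconn : IsConn ends)
    (hσ : IsOrientation ends σ) {p : Fin n → R} (hp : omeas σ p = 0) (a b : Fin n) :
    p a = p b := by
  induction hconn a b with
  | refl => rfl
  | tail _ hstep ih =>
    obtain ⟨e, he⟩ := hstep
    have h0 := congrFun hp e
    refine ih.trans ?_
    rcases hσ e with h | h <;> rcases he with h' | h' <;>
      simp only [omeas, h, h', Pi.zero_apply, sub_eq_zero] at h0 <;> first | exact h0 | exact h0.symm

lemma finrank_ker_inc_le_one (hloop : ∀ e, (σ e).1 ≠ (σ e).2) (hconn : IsConn ends)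
    (hσ : IsOrientation ends σ) :
    Module.finrank ℝ (LinearMap.ker (inc σ).mulVecLin) ≤ 1 := by
  have hle : LinearMap.ker (inc σ).mulVecLin ≤ ℝ ∙ fun _ => 1 := by
    intro p hp
    rw [LinearMap.mem_ker, mulVecLin_apply, inc_mulVec hloop] at hp
    have hconst := hconn.eq_of_omeas_eq_zero hσ hp
    rw [Submodule.mem_span_singleton]
    cases n with
    | zero => exact ⟨0, Subsingleton.elim _ _⟩
    | succ n => exact ⟨p 0, funext fun u => by simp [hconst u 0]⟩
  calc _ ≤ Module.finrank ℝ (ℝ ∙ (fun _ => 1 : Fin n → ℝ)) := Submodule.finrank_mono hle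
    _ ≤ 1 := by simpa using finrank_span_le_card ({fun _ => 1} : Set (Fin n → ℝ))

lemma finrank_ker_inc_transpose_le (hloop : ∀ e, (σ e).1 ≠ (σ e).2) (hconn : IsConn ends)
    (hσ : IsOrientation ends σ) :
    Module.finrank ℝ (LinearMap.ker (inc σ)ᵀ.mulVecLin) ≤ m - n + 1 := by
  have hM := LinearMap.finrank_range_add_finrank_ker (inc σ).mulVecLin
  have hMt := LinearMap.finrank_range_add_finrank_ker (inc σ)ᵀ.mulVecLin
  have hrank : (inc σ)ᵀ.rank = (inc σ).rank := rank_transpose _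
  have hker := finrank_ker_inc_le_one hloop hconn hσ
  simp only [rank, Module.finrank_fintype_fun_eq_card, Fintype.card_fin] at hM hMt hrank
  omega

end Incidence

namespace SimpleCycle

variable {n m : ℕ} {ends : Fin m → Fin n × Fin n} (ρ : SimpleCycle ends)

instance : NeZero ρ.k := ⟨by have := ρ.hk; omega⟩

lemma cycVec_edge (σ : Fin m → Fin n × Fin n) (i : ZMod ρ.k) :
    cycVec ρ σ (ρ.edge i) = if σ (ρ.edge i) = (ρ.v i, ρ.v (i + 1)) then 1 else -1 := by
  have hex : ∃ j, ρ.edge j = ρ.edge i := ⟨i, rfl⟩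
  rw [cycVec, dif_pos hex, ρ.hedge hex.choose_spec]

lemma cycVec_eq_zero {σ : Fin m → Fin n × Fin n} {e : Fin m} (he : e ∉ Set.range ρ.edge) :
    cycVec ρ σ e = 0 :=
  dif_neg he

/-- Each edge of `ρ` contributes `p (v (i+1)) - p (v i)` whatever its orientation, so the sum
telescopes around the cycle. -/
lemma sum_cycVec_mul_omeas {σ : Fin m → Fin n × Fin n} (hσ : IsOrientation ends σ)
    {R : Type*} [CommRing R] (p : Fin n → R) :
    ∑ e, (cycVec ρ σ e : R) * omeas σ p e = 0 := by
  have hterm : ∀ i, (cycVec ρ σ (ρ.edge i) : R) * omeas σ p (ρ.edge i) =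
      p (ρ.v (i + 1)) - p (ρ.v i) := by
    intro i
    rw [cycVec_edge]
    by_cases h : σ (ρ.edge i) = (ρ.v i, ρ.v (i + 1))
    · simp [h, omeas]
    · have h' : σ (ρ.edge i) = (ρ.v (i + 1), ρ.v i) := by
        rcases ρ.hends i with h₁ | h₁ <;> rcases hσ (ρ.edge i) with h₂ | h₂ <;>
          simp_all
      rw [if_neg h, omeas, h']; simp
  rw [← Finset.sum_subset (Finset.subset_univ (Finset.univ.image ρ.edge))
      fun e _ he => by simp [cycVec_eq_zero ρ (by simpa using he)],
    Finset.sum_image fun i _ j _ h => ρ.hedge h, Finset.sum_congr rfl fun i _ => hterm i,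
    Finset.sum_sub_distrib, sub_eq_zero]
  exact Fintype.sum_equiv (Equiv.addRight 1) _ _ fun _ => rfl

end SimpleCycle

section CycleSpace

variable {n m : ℕ} {ends σ : Fin m → Fin n × Fin n}

lemma castR_cycVec_vecMul_inc (hloop : ∀ e, (σ e).1 ≠ (σ e).2) (hσ : IsOrientation ends σ)
    (ρ : SimpleCycle ends) : castR (cycVec ρ σ) ᵥ* inc σ = 0 := by
  classical
  ext u
  rw [Pi.zero_apply, ← mul_one ((castR (cycVec ρ σ) ᵥ* inc σ) u), ← dotProduct_single,
    ← dotProduct_mulVec, inc_mulVec hloop]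
  exact ρ.sum_cycVec_mul_omeas hσ _

lemma mem_span_cycVec_of_vecMul_inc_eq_zero (hloop : ∀ e, (σ e).1 ≠ (σ e).2)
    (hconn : IsConn ends) (hσ : IsOrientation ends σ) {ρs : Fin (m - n + 1) → SimpleCycle ends}
    (hbasis : LinearIndependent ℝ fun i => castR (cycVec (ρs i) σ)) {z : Fin m → ℝ}
    (hz : z ᵥ* inc σ = 0) :
    z ∈ Submodule.span ℝ (Set.range fun i => castR (cycVec (ρs i) σ)) := by
  have hle : Submodule.span ℝ (Set.range fun i => castR (cycVec (ρs i) σ)) ≤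
      LinearMap.ker (inc σ)ᵀ.mulVecLin := by
    rw [Submodule.span_le, Set.range_subset_iff]
    intro i
    simp [castR_cycVec_vecMul_inc hloop hσ]
  have heq := Submodule.eq_of_le_of_finrank_le hle <| by
    rw [finrank_span_eq_card hbasis, Fintype.card_fin]
    exact finrank_ker_inc_transpose_le hloop hconn hσ
  simpa [heq, mulVec_transpose] using hz

end CycleSpace

lemma castR_snoc {m : ℕ} (a : Fin m → ℤ) (b : ℤ) :
    castR (Fin.snoc a b) = Fin.snoc (castR a) (b : ℝ) := by
  ext j
  refine Fin.lastCases ?_ (fun i => ?_) j <;> simp [castR]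

/-- `v ↦ [v ; a ⬝ᵥ v]`, which maps `w_{ρ,σ}` to `ŵ_{ρ,σ}` when `a = ε`. -/
def snocDotProduct {m : ℕ} (a : Fin m → ℝ) : (Fin m → ℝ) →ₗ[ℝ] (Fin (m + 1) → ℝ) where
  toFun v := Fin.snoc v (a ⬝ᵥ v)
  map_add' v w := by
    ext j
    refine Fin.lastCases ?_ (fun i => ?_) j <;> simp [dotProduct_add]
  map_smul' c v := by
    ext j
    refine Fin.lastCases ?_ (fun i => ?_) j <;> simp [dotProduct_smul]

lemma castR_snoc_mem_span_hatCycVec {n m c : ℕ} {ends σ : Fin m → Fin n × Fin n}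
    {ρs : Fin c → SimpleCycle ends} (ε x : Fin m → ℤ)
    (hx : castR x ∈ Submodule.span ℝ (Set.range fun i => castR (cycVec (ρs i) σ))) :
    castR (Fin.snoc x (ε ⬝ᵥ x)) ∈
      Submodule.span ℝ (Set.range fun i => castR (hatCycVec (ρs i) σ ε)) := by
  have hcast : ∀ y : Fin m → ℤ,
      castR (Fin.snoc y (ε ⬝ᵥ y)) = snocDotProduct (castR ε) (castR y) := by
    intro y
    simp [castR_snoc, snocDotProduct, castR, dotProduct]
  have := Submodule.mem_map_of_mem (f := snocDotProduct (castR ε)) hx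
  rw [Submodule.map_span, ← Set.range_comp] at this
  rw [hcast]
  convert this using 3
  exact funext fun i => hcast _

lemma card_le_pow_of_dotProduct_eq {ι K : Type*} [Fintype ι] [DecidableEq ι] [Ring K]
    [NoZeroDivisors K] [CharZero K] (A : Finset ℤ) (S : Set (ι → ℤ))
    (hA : ∀ p ∈ S, ∀ i, p i ∈ A) {y : ι → K} (hy : y ≠ 0) (c : K)
    (hc : ∀ p ∈ S, y ⬝ᵥ (fun i => (p i : K)) = c) :
    Nat.card S ≤ #A ^ (Fintype.card ι - 1) := by
  obtain ⟨u₀, hu₀⟩ := Function.ne_iff.1 hy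
  let F : S → ({i // i ≠ u₀} → A) := fun p i => ⟨p.1 i, hA p.1 p.2 i⟩
  have hF : Function.Injective F := by
    rintro ⟨p, hp⟩ ⟨q, hq⟩ hpq
    have hoff : ∀ i ≠ u₀, p i = q i := fun i hi => congrArg Subtype.val (congrFun hpq ⟨i, hi⟩)
    have hdiff : y u₀ * ((p u₀ : K) - q u₀) = 0 := by
      have h := congrArg₂ (· - ·) (hc p hp) (hc q hq)
      rwa [sub_self, ← dotProduct_sub, dotProduct,
        Finset.sum_eq_single u₀ (fun i _ hi => by simp [hoff i hi]) (by simp)] at h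
    have h₀ : p u₀ = q u₀ := by
      exact_mod_cast sub_eq_zero.1 ((mul_eq_zero.1 hdiff).resolve_left hu₀)
    refine Subtype.ext (funext fun i => ?_)
    by_cases hi : i = u₀
    · exact hi ▸ h₀
    · exact hoff i hi
  calc Nat.card S ≤ Nat.card ({i // i ≠ u₀} → A) := Nat.card_le_card_of_injective F hF
    _ = #A ^ (Fintype.card ι - 1) := by
      simp [Nat.card_eq_fintype_card, Fintype.card_subtype_compl]

section Sad

variable {n m c : ℕ} {ends σ : Fin m → Fin n × Fin n} {ρs : Fin c → SimpleCycle ends}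
  {ε x : Fin m → ℤ} {f : ℤ} {B : ℕ} {p : Fin n → ℤ}

lemma SadWith.eq_dotProduct (hp : SadWith ρs σ ε (Fin.snoc x f) B p) :
    f = x ⬝ᵥ omeas σ p + ε ⬝ᵥ x := by
  have h := last_eq_of_mem_LatZ hp.2.2.1
  simp only [Fin.snoc_last, Fin.snoc_castSucc] at h
  rw [h, dotProduct, dotProduct, ← Finset.sum_add_distrib]
  exact Finset.sum_congr rfl fun e _ => by ring

lemma SadWith.vecMul_inc_dotProduct (hloop : ∀ e, (σ e).1 ≠ (σ e).2)
    (hp : SadWith ρs σ ε (Fin.snoc x f) B p) :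
    (castR x ᵥ* inc σ) ⬝ᵥ castR p = ((f - ε ⬝ᵥ x : ℤ) : ℝ) := by
  rw [← dotProduct_mulVec, inc_mulVec hloop, hp.eq_dotProduct]
  simp [castR, dotProduct, omeas]

lemma SadWith.vecMul_inc_ne_zero {ρs : Fin (m - n + 1) → SimpleCycle ends}
    (hloop : ∀ e, (σ e).1 ≠ (σ e).2) (hconn : IsConn ends) (hσ : IsOrientation ends σ)
    (hbasis : LinearIndependent ℝ fun i => castR (cycVec (ρs i) σ))
    (hp : SadWith ρs σ ε (Fin.snoc x f) B p) : castR x ᵥ* inc σ ≠ 0 := by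
  intro hx
  have hf : f = ε ⬝ᵥ x := by
    have h := hp.vecMul_inc_dotProduct hloop
    rw [hx, zero_dotProduct] at h
    exact_mod_cast (sub_eq_zero.1 (by exact_mod_cast h.symm) : f = ε ⬝ᵥ x)
  apply hp.2.1
  rw [hf]
  exact castR_snoc_mem_span_hatCycVec ε x
    (mem_span_cycVec_of_vecMul_inc_eq_zero hloop hconn hσ hbasis hx)

end Sad

theorem stmt14_general (n m : ℕ) (ends : Fin m → Fin n × Fin n) (hG : IsSimple ends)
    (hconn : IsConn ends) (σ : Fin m → Fin n × Fin n) (hσ : IsOrientation ends σ)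
    (ρs : Fin (m - n + 1) → SimpleCycle ends)
    (hbasis : LinearIndependent ℝ fun i => castR (cycVec (ρs i) σ))
    (ε : Fin m → ℤ) (x : Fin m → ℤ) (f : ℤ) (B : ℕ) :
    Nat.card {p : Fin n → ℤ //
        (∀ i, 1 ≤ p i ∧ p i ≤ (B : ℤ)) ∧ SadWith ρs σ ε (Fin.snoc x f) B p} ≤
      (2 * B) ^ (n - 1) := by
  have hloop := hσ.fst_ne_snd hG
  rcases isEmpty_or_nonempty {p : Fin n → ℤ //
      (∀ i, 1 ≤ p i ∧ p i ≤ (B : ℤ)) ∧ SadWith ρs σ ε (Fin.snoc x f) B p} with hS | ⟨p₀, -, hp₀⟩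
  · simp
  calc _ ≤ #(Icc 1 (B : ℤ)) ^ (Fintype.card (Fin n) - 1) :=
        card_le_pow_of_dotProduct_eq _ {p | (∀ i, 1 ≤ p i ∧ p i ≤ (B : ℤ)) ∧ _}
          (fun p hp i => mem_Icc.2 (hp.1 i))
          (hp₀.vecMul_inc_ne_zero hloop hconn hσ hbasis) _
          fun p hp => hp.2.vecMul_inc_dotProduct hloop
    _ = B ^ (n - 1) := by simp
    _ ≤ (2 * B) ^ (n - 1) := Nat.pow_le_pow_left (by omega) _

/-- for a vertex-consistent orientation `σ`, the number of configurations
`p ∈ {1,…,B}^n` that are sad with `(σ, x̂)` is at most `(2B)^{n-1}`. -/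
theorem stmt14 (n m : ℕ) (hn : 2 ≤ n) (ends : Fin m → Fin n × Fin n) (hG : IsSimple ends)
    (hconn : IsConn ends) (σ : Fin m → Fin n × Fin n) (hσ : IsOrientation ends σ)
    (hvc : ∃ q : Fin n → ℤ, σ = configOrient ends q)
    (ρs : Fin (m - n + 1) → SimpleCycle ends)
    (hbasis : LinearIndependent ℝ fun i => castR (cycVec (ρs i) σ))
    (ε : Fin m → ℤ) (hε : SmallVec ε) (x : Fin m → ℤ) (f : ℤ) (B : ℕ) (hB : 2 ≤ B) :
    Nat.card {p : Fin n → ℤ //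
        (∀ i, 1 ≤ p i ∧ p i ≤ (B : ℤ)) ∧ SadWith ρs σ ε (Fin.snoc x f) B p} ≤
      (2 * B) ^ (n - 1) :=
  stmt14_general n m ends hG hconn σ hσ ρs hbasis ε x f B
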